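/- arXiv:2602.16522 — 2 statements merged into one kernel-verified Lean document; each statement's English description precedes it below -/
import Mathlib

section
/- Let t be a term and σ a substitution. Suppose some variable x reachable from a variable of t in the variable transition graph of σ lies on a cycle (x occurs in xσ^k for some k > 0) and xσ is not a variable. Then tσ^m ≠ tσ^{m'} whenever m ≠ m', i.e., ⟨t, σ⟩ is a pattern term. -/
/-- First-order terms over a signature `S` with variables `V`. -/
inductive Tm (S V : Type) : Type
  | var : V → Tm S V
  | app : S → List (Tm S V) → Tm S V

namespace Tm
variable {S V : Type}

/-- Applying a substitution `σ : V → Tm S V` homomorphically to a term. -/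
def subst (σ : V → Tm S V) : Tm S V → Tm S V
  | var x => σ x
  | app f ts => app f (ts.attach.map fun u => subst σ u.1)
decreasing_by
  have := List.sizeOf_lt_of_mem u.2
  simp only [Tm.app.sizeOf_spec]
  omega

/-- The variable `x` occurs in the term `t`. -/
inductive Occurs (x : V) : Tm S V → Prop
  | var : Occurs x (var x)
  | app {f : S} {ts : List (Tm S V)} {t : Tm S V} :
      t ∈ ts → Occurs x t → Occurs x (app f ts)

/-- `iter σ n t` is `t σⁿ`, the `n`-fold application of `σ` to `t`. -/
def iter (σ : V → Tm S V) (n : ℕ) (t : Tm S V) : Tm S V :=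
  (subst σ)^[n] t

end Tm

/-!
Since `x σ` is not a variable, the occurrence of `x` in `x σᵏ` lies strictly below the root,
so `x σ^{kn}` is a proper subterm of `x σ^{k(n+1)}` and the sizes of the terms `x σ^{kn}` are
unbounded. Reachability makes `x σ^{kn}` a subterm of `t σ^{kn+j}`, so the sizes of the `t σⁱ`
are unbounded as well. But `t σᵐ = t σ^{m'}` with `m ≠ m'` makes the sequence `(t σⁱ)ᵢ`
eventually periodic, so it would take only finitely many values.
-/

theorem Function.finite_range_iterate_of_iterate_eq {α : Type*} {f : α → α} {a : α} {m n : ℕ}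
    (heq : f^[m] a = f^[n] a) (hne : m ≠ n) : (Set.range fun i => f^[i] a).Finite := by
  wlog hlt : m < n generalizing m n
  · exact this heq.symm hne.symm (by omega)
  refine ((Set.finite_Iio n).image fun i => f^[i] a).subset ?_
  rintro _ ⟨i, rfl⟩
  induction i using Nat.strong_induction_on with
  | _ i ih =>
    by_cases hi : i < n
    · exact ⟨i, hi, rfl⟩
    · have hshift : f^[i] a = f^[i - n + m] a := by
        rw [Function.iterate_add_apply, heq, ← Function.iterate_add_apply,
          Nat.sub_add_cancel (by omega)]
      show f^[i] a ∈ _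
      rw [hshift]
      exact ih _ (by omega)

namespace Tm
variable {S V : Type}

theorem subst_var (σ : V → Tm S V) (x : V) : subst σ (var x) = σ x := by
  rw [subst]

theorem subst_app (σ : V → Tm S V) (f : S) (ts : List (Tm S V)) :
    subst σ (app f ts) = app f (ts.map (subst σ)) := by
  rw [subst]
  simp

theorem iter_add (σ : V → Tm S V) (m n : ℕ) (t : Tm S V) :
    iter σ (m + n) t = iter σ m (iter σ n t) :=
  Function.iterate_add_apply _ _ _ _

theorem iter_zero (σ : V → Tm S V) : iter σ 0 = id := rfl

theorem iter_succ' (σ : V → Tm S V) (n : ℕ) : iter σ (n + 1) = subst σ ∘ iter σ n :=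
  Function.iterate_succ' _ _

theorem iter_succ_var (σ : V → Tm S V) (n : ℕ) (x : V) :
    iter σ (n + 1) (var x) = iter σ n (σ x) := by
  rw [iter, Function.iterate_succ_apply, subst_var, iter]

theorem iter_app (σ : V → Tm S V) (n : ℕ) (f : S) (ts : List (Tm S V)) :
    iter σ n (app f ts) = app f (ts.map (iter σ n)) := by
  induction n with
  | zero => rw [iter_zero, List.map_id, id]
  | succ n ih => rw [iter_succ', Function.comp_apply, ih, subst_app, List.map_map]

theorem iter_ne_var {σ : V → Tm S V} {x : V} (hx : ∀ y, σ x ≠ var y) {k : ℕ} (hk : 0 < k)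
    (y : V) : iter σ k (var x) ≠ var y := by
  obtain ⟨k, rfl⟩ := Nat.exists_eq_add_of_lt hk
  cases hσx : σ x with
  | var z => exact absurd hσx (hx z)
  | app f ts => simp [iter_succ_var, hσx, iter_app]

theorem sizeOf_iter_lt_of_mem (σ : V → Tm S V) (n : ℕ) {f : S} {ts : List (Tm S V)}
    {u : Tm S V} (hu : u ∈ ts) : sizeOf (iter σ n u) < sizeOf (iter σ n (app f ts)) := by
  rw [iter_app, app.sizeOf_spec]
  have := List.sizeOf_lt_of_mem (List.mem_map_of_mem (f := iter σ n) hu)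
  omega

theorem Occurs.sizeOf_iter_le {x : V} {s : Tm S V} (h : Occurs x s) (σ : V → Tm S V) (n : ℕ) :
    sizeOf (iter σ n (Tm.var x)) ≤ sizeOf (iter σ n s) := by
  induction h with
  | var => rfl
  | app hu _ ih => exact ih.trans (sizeOf_iter_lt_of_mem σ n hu).le

theorem Occurs.sizeOf_iter_lt {x : V} {s : Tm S V} (h : Occurs x s) (hs : ∀ y, s ≠ Tm.var y)
    (σ : V → Tm S V) (n : ℕ) : sizeOf (iter σ n (Tm.var x)) < sizeOf (iter σ n s) := by
  cases h with
  | var => exact absurd rfl (hs x)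
  | app hu h => exact (h.sizeOf_iter_le σ n).trans_lt (sizeOf_iter_lt_of_mem σ n hu)

theorem le_sizeOf_iter_of_cycle {σ : V → Tm S V} {x : V} (hx : ∀ y, σ x ≠ var y) {k : ℕ}
    (hk : 0 < k) (hcyc : Occurs x (iter σ k (var x))) (n : ℕ) :
    n ≤ sizeOf (iter σ (k * n) (var x)) := by
  have hmono : StrictMono fun n => sizeOf (iter σ (k * n) (var x)) := by
    refine strictMono_nat_of_lt_succ fun n => ?_
    rw [Nat.mul_succ, iter_add]
    exact hcyc.sizeOf_iter_lt (iter_ne_var hx hk) σ _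
  exact hmono.id_le n

theorem not_bddAbove_sizeOf_iter {σ : V → Tm S V} {t : Tm S V} {x y : V} (hyt : Occurs y t)
    {j : ℕ} (hreach : Occurs x (iter σ j (var y))) {k : ℕ} (hk : 0 < k)
    (hcyc : Occurs x (iter σ k (var x))) (hx : ∀ y, σ x ≠ var y) :
    ¬ BddAbove (Set.range fun i => sizeOf (iter σ i t)) := by
  refine not_bddAbove_iff.mpr fun N => ⟨_, ⟨k * (N + 1) + j, rfl⟩, ?_⟩
  calc N < N + 1 := N.lt_succ_self
    _ ≤ sizeOf (iter σ (k * (N + 1)) (var x)) := le_sizeOf_iter_of_cycle hx hk hcyc _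
    _ ≤ sizeOf (iter σ (k * (N + 1)) (iter σ j (var y))) := hreach.sizeOf_iter_le σ _
    _ ≤ sizeOf (iter σ (k * (N + 1) + j) t) := by
      rw [← iter_add]
      exact hyt.sizeOf_iter_le σ _

end Tm

/-- If some variable `x`, reachable in the variable transition graph of `σ` from a
variable of `t` (i.e. `x` occurs in `y σʲ` for some variable `y` of `t` and some `j`),
lies on a cycle (`x` occurs in `x σᵏ` for some `k > 0`) and `x σ` is not a variable,
then `t σᵐ ≠ t σ^{m'}` whenever `m ≠ m'`, i.e. `⟨t, σ⟩` is a pattern term. -/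
theorem pattern_term_of_cycle {S V : Type} (t : Tm S V) (σ : V → Tm S V)
    (h : ∃ x : V,
      (∃ y : V, Tm.Occurs y t ∧ ∃ j : ℕ, Tm.Occurs x (Tm.iter σ j (Tm.var y))) ∧
      (∃ k : ℕ, 0 < k ∧ Tm.Occurs x (Tm.iter σ k (Tm.var x))) ∧
      (∀ y : V, σ x ≠ Tm.var y)) :
    ∀ m m' : ℕ, m ≠ m' → Tm.iter σ m t ≠ Tm.iter σ m' t := by
  obtain ⟨x, ⟨y, hyt, j, hreach⟩, ⟨k, hk, hcyc⟩, hx⟩ := h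
  intro m m' hne heq
  have hfin : (Set.range fun i => Tm.iter σ i t).Finite :=
    Function.finite_range_iterate_of_iterate_eq heq hne
  refine Tm.not_bddAbove_sizeOf_iter hyt hreach hk hcyc hx ?_
  rw [Set.range_comp' sizeOf]
  exact (hfin.image sizeOf).bddAbove
end

section
/- Let μ : ℤ → ℝ≥0 be a probability mass function with finite support defining a random walk on ℤ absorbed at values ≤ 0, with μ(0) < 1 and expected increment Σ_x x·μ(x) < 0. Then from every starting value the walk is absorbed with probability 1 and the expected number of steps until absorption is finite. -/
/-!
Choose `θ > 0` with `ρ := ∑ₓ μ x · e^{θx} < 1`; such a `θ` exists because this moment generating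
function equals `1` at `0` and has derivative `∑ₓ x · μ x < 0` there. Then `e^{θ y}` is a
supermartingale for the walk killed at absorption, which gives the Chernoff-type bound
`P(T > n) ≤ ρⁿ e^{θ y}` on the absorption time `T`. The tail probabilities are therefore
geometrically small: they are summable and tend to `0`.
-/

/-- `probWithin μ Sup n y` is the probability that the random walk with step
distribution `μ` (with support contained in the finite set `Sup`), started at `y`
and absorbed at values `≤ 0`, reaches a value `≤ 0` within `n` steps. -/
noncomputable def probWithin (μ : ℤ → ℝ) (Sup : Finset ℤ) : ℕ → ℤ → ℝ
  | 0, y => if y ≤ 0 then 1 else 0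
  | n + 1, y => if y ≤ 0 then 1 else ∑ x ∈ Sup, μ x * probWithin μ Sup n (y + x)

/-- The probability that the random walk started at `x₀` ever reaches a value `≤ 0`. -/
noncomputable def termProb (μ : ℤ → ℝ) (Sup : Finset ℤ) (x₀ : ℤ) : ℝ :=
  ⨆ n : ℕ, probWithin μ Sup n x₀

open Filter Topology

noncomputable def stepMGF (μ : ℤ → ℝ) (Sup : Finset ℤ) (θ : ℝ) : ℝ :=
  ∑ x ∈ Sup, μ x * Real.exp (θ * x)

lemma exists_gt_lt_of_hasDerivAt_neg {f : ℝ → ℝ} {f' x : ℝ} (hf : HasDerivAt f f' x)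
    (hf' : f' < 0) : ∃ y, x < y ∧ f y < f x := by
  obtain ⟨y, hslope, hxy⟩ :=
    ((hf.hasDerivWithinAt.liminf_right_slope_le hf').and_eventually self_mem_nhdsWithin).exists
  exact ⟨y, hxy, (slope_neg_iff_of_le (le_of_lt hxy)).1 hslope⟩

section StepMGF

variable {μ : ℤ → ℝ} {Sup : Finset ℤ}

lemma stepMGF_zero (hsum : ∑ x ∈ Sup, μ x = 1) : stepMGF μ Sup 0 = 1 := by
  simpa [stepMGF] using hsum

lemma stepMGF_nonneg (hnn : ∀ x, 0 ≤ μ x) (θ : ℝ) : 0 ≤ stepMGF μ Sup θ :=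
  Finset.sum_nonneg fun x _ => mul_nonneg (hnn x) (Real.exp_nonneg _)

lemma hasDerivAt_stepMGF (θ : ℝ) :
    HasDerivAt (stepMGF μ Sup) (∑ x ∈ Sup, μ x * (Real.exp (θ * x) * x)) θ := by
  unfold stepMGF
  refine HasDerivAt.fun_sum fun x _ => HasDerivAt.const_mul (μ x) ?_
  simpa using ((hasDerivAt_id θ).mul_const (x : ℝ)).exp

lemma exists_pos_stepMGF_lt_one (hsum : ∑ x ∈ Sup, μ x = 1)
    (hE : ∑ x ∈ Sup, (x : ℝ) * μ x < 0) : ∃ θ, 0 < θ ∧ stepMGF μ Sup θ < 1 := by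
  have hderiv : HasDerivAt (stepMGF μ Sup) (∑ x ∈ Sup, (x : ℝ) * μ x) 0 := by
    simpa [mul_comm] using hasDerivAt_stepMGF (μ := μ) (Sup := Sup) 0
  simpa [stepMGF_zero hsum] using exists_gt_lt_of_hasDerivAt_neg hderiv hE

end StepMGF

section ProbWithin

variable {μ : ℤ → ℝ} {Sup : Finset ℤ}

lemma probWithin_le_one (hnn : ∀ x, 0 ≤ μ x) (hsum : ∑ x ∈ Sup, μ x = 1) :
    ∀ (n : ℕ) (y : ℤ), probWithin μ Sup n y ≤ 1
  | 0, y => by unfold probWithin; split <;> norm_num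
  | n + 1, y => by
    unfold probWithin
    split
    · rfl
    · calc ∑ x ∈ Sup, μ x * probWithin μ Sup n (y + x)
          ≤ ∑ x ∈ Sup, μ x := Finset.sum_le_sum fun x _ =>
            mul_le_of_le_one_right (hnn x) (probWithin_le_one hnn hsum n (y + x))
        _ = 1 := hsum

lemma probWithin_le_succ (hnn : ∀ x, 0 ≤ μ x) :
    ∀ (n : ℕ) (y : ℤ), probWithin μ Sup n y ≤ probWithin μ Sup (n + 1) y
  | 0, y => by
    unfold probWithin
    split
    · rfl
    · refine Finset.sum_nonneg fun x _ => mul_nonneg (hnn x) ?_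
      unfold probWithin
      split <;> norm_num
  | n + 1, y => by
    rw [probWithin, probWithin]
    split
    · rfl
    · exact Finset.sum_le_sum fun x _ =>
        mul_le_mul_of_nonneg_left (probWithin_le_succ hnn n (y + x)) (hnn x)

lemma monotone_probWithin (hnn : ∀ x, 0 ≤ μ x) (y : ℤ) :
    Monotone fun n => probWithin μ Sup n y :=
  monotone_nat_of_le_succ fun n => probWithin_le_succ hnn n y

lemma one_sub_probWithin_le (hnn : ∀ x, 0 ≤ μ x) (hsum : ∑ x ∈ Sup, μ x = 1) {θ : ℝ}
    (hθ : 0 ≤ θ) : ∀ (n : ℕ) (y : ℤ),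
    1 - probWithin μ Sup n y ≤ stepMGF μ Sup θ ^ n * Real.exp (θ * y)
  | 0, y => by
    unfold probWithin
    split_ifs with hy
    · simpa using (Real.exp_pos _).le
    · simpa using Real.one_le_exp (mul_nonneg hθ (by exact_mod_cast (not_le.1 hy).le))
  | n + 1, y => by
    unfold probWithin
    split_ifs
    · simpa using mul_nonneg (pow_nonneg (stepMGF_nonneg hnn θ) _) (Real.exp_pos _).le
    · calc 1 - ∑ x ∈ Sup, μ x * probWithin μ Sup n (y + x)
          = ∑ x ∈ Sup, μ x * (1 - probWithin μ Sup n (y + x)) := by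
            simp only [mul_sub, mul_one, Finset.sum_sub_distrib, hsum]
        _ ≤ ∑ x ∈ Sup, μ x * (stepMGF μ Sup θ ^ n * Real.exp (θ * ↑(y + x))) :=
            Finset.sum_le_sum fun x _ =>
              mul_le_mul_of_nonneg_left (one_sub_probWithin_le hnn hsum hθ n (y + x)) (hnn x)
        _ = ∑ x ∈ Sup, stepMGF μ Sup θ ^ n * Real.exp (θ * y) * (μ x * Real.exp (θ * x)) :=
            Finset.sum_congr rfl fun x _ => by push_cast; rw [mul_add, Real.exp_add]; ring
        _ = stepMGF μ Sup θ ^ (n + 1) * Real.exp (θ * y) := by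
            rw [← Finset.mul_sum, ← stepMGF, pow_succ]; ring

lemma summable_one_sub_probWithin (hnn : ∀ x, 0 ≤ μ x) (hsum : ∑ x ∈ Sup, μ x = 1) {θ : ℝ}
    (hθ : 0 ≤ θ) (hρ : stepMGF μ Sup θ < 1) (y : ℤ) :
    Summable fun n => 1 - probWithin μ Sup n y :=
  Summable.of_nonneg_of_le (fun n => sub_nonneg.2 (probWithin_le_one hnn hsum n y))
    (fun n => one_sub_probWithin_le hnn hsum hθ n y)
    ((summable_geometric_of_lt_one (stepMGF_nonneg hnn θ) hρ).mul_right _)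

lemma termProb_eq_one_of_summable (hnn : ∀ x, 0 ≤ μ x) {y : ℤ}
    (h : Summable fun n => 1 - probWithin μ Sup n y) : termProb μ Sup y = 1 := by
  have hlim : Tendsto (fun n => probWithin μ Sup n y) atTop (𝓝 1) := by
    simpa using (tendsto_const_nhds (x := (1 : ℝ))).sub h.tendsto_atTop_zero
  exact (isLUB_of_tendsto_atTop (monotone_probWithin hnn y) hlim).ciSup_eq

end ProbWithin

/-- The second conjunct is finiteness of the expected absorption time `𝔼 T = ∑ₙ P(T > n)`. -/
theorem negative_drift_walk_past_general (μ : ℤ → ℝ) (Sup : Finset ℤ)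
    (hnn : ∀ x : ℤ, 0 ≤ μ x)
    (hsum : ∑ x ∈ Sup, μ x = 1)
    (hE : ∑ x ∈ Sup, (x : ℝ) * μ x < 0) :
    (∀ x₀ : ℤ, termProb μ Sup x₀ = 1) ∧
    (∀ x₀ : ℤ, Summable (fun n : ℕ => 1 - probWithin μ Sup n x₀)) := by
  obtain ⟨θ, hθ, hρ⟩ := exists_pos_stepMGF_lt_one hsum hE
  have hsummable := summable_one_sub_probWithin hnn hsum hθ.le hρ
  exact ⟨fun x₀ => termProb_eq_one_of_summable hnn (hsummable x₀), hsummable⟩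

/-- If `μ 0 < 1` and the expected increment is negative, then from every starting value
the walk is absorbed with probability `1` and the expected number of steps until
absorption (which equals `∑ₙ P(T > n) = ∑ₙ (1 - probWithin μ Sup n x₀)`) is finite. -/
theorem negative_drift_walk_past (μ : ℤ → ℝ) (Sup : Finset ℤ)
    (hnn : ∀ x : ℤ, 0 ≤ μ x) (hsupp : ∀ x ∉ Sup, μ x = 0)
    (hsum : ∑ x ∈ Sup, μ x = 1) (h0 : μ 0 < 1)
    (hE : ∑ x ∈ Sup, (x : ℝ) * μ x < 0) :
    (∀ x₀ : ℤ, termProb μ Sup x₀ = 1) ∧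
    (∀ x₀ : ℤ, Summable (fun n : ℕ => 1 - probWithin μ Sup n x₀)) :=
  negative_drift_walk_past_general μ Sup hnn hsum hE
end
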